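/- Fix integers n ≥ 1 and l ≥ 1, and for k ∈ ℤ let i_k be the unique element of {0,1,…,n} with i_k ≡ −k (mod n+1). There exists a constant C (depending only on n and l) such that for every M ≥ C the following holds: if R : B_M ⊗ B_l → B_l ⊗ B_M is a bijection satisfying R ∘ ẽ_i = ẽ_i ∘ R and R ∘ f̃_i = f̃_i ∘ R as partial maps for all i ∈ {0,1,…,n}, and if R((0,…,0,M) ⊗ z) = z̃ ⊗ ũ for z ∈ B_l, then t(ũ) = t(z), where t(x_1,…,x_{n+1}) = (x_n, x_{n−1},…,x_1). -/

import Mathlib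

/-- Iterated application of a partial map: `OptIter g m a` is `g^m a`. -/
def OptIter {α : Type} (g : α → Option α) : ℕ → α → Option α
  | 0, a => some a
  | m + 1, a => (g a).bind (OptIter g m)

/-- Apply the partial maps `g 1`, `g 2`, ..., `g m` in this order. -/
def ChainOpt {α : Type} (g : ℕ → α → Option α) (m : ℕ) (a : α) : Option α :=
  (List.range m).foldl (fun acc j => acc.bind (g (j + 1))) (some a)

/-- A set with partial Kashiwara-type operators indexed by `{0, 1, ..., n}`. -/
structure PreCrystal (n : ℕ) where
  carrier : Type
  e : Fin (n + 1) → carrier → Option carrier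
  f : Fin (n + 1) → carrier → Option carrier

namespace PreCrystal

variable {n : ℕ}

/-- `ε_i(b) = max {m ≥ 0 : ẽ_i^m b is defined}`. -/
noncomputable def eps (C : PreCrystal n) (i : Fin (n + 1)) (b : C.carrier) : ℕ :=
  sSup {m | OptIter (C.e i) m b ≠ none}

/-- `φ_i(b) = max {m ≥ 0 : f̃_i^m b is defined}`. -/
noncomputable def phi (C : PreCrystal n) (i : Fin (n + 1)) (b : C.carrier) : ℕ :=
  sSup {m | OptIter (C.f i) m b ≠ none}

/-- `ẽ_i^max b = ẽ_i^{ε_i(b)} b`. -/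
noncomputable def eMax (C : PreCrystal n) (i : Fin (n + 1)) (b : C.carrier) : Option C.carrier :=
  OptIter (C.e i) (C.eps i b) b

/-- The Weyl group operator `S_i`: `f̃_i^{φ_i(b)-ε_i(b)} b` if `φ_i(b) ≥ ε_i(b)`,
and `ẽ_i^{ε_i(b)-φ_i(b)} b` if `φ_i(b) ≤ ε_i(b)`. -/
noncomputable def S (C : PreCrystal n) (i : Fin (n + 1)) (b : C.carrier) : Option C.carrier :=
  if C.eps i b ≤ C.phi i b then OptIter (C.f i) (C.phi i b - C.eps i b) b
  else OptIter (C.e i) (C.eps i b - C.phi i b) b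

/-- The tensor product `C ⊗ D` of two crystals, with the Kashiwara tensor product rule. -/
noncomputable def tensor (C D : PreCrystal n) : PreCrystal n where
  carrier := C.carrier × D.carrier
  e := fun i p =>
    if D.eps i p.2 ≤ C.phi i p.1 then (C.e i p.1).map (fun b => (b, p.2))
    else (D.e i p.2).map (fun b => (p.1, b))
  f := fun i p =>
    if D.eps i p.2 < C.phi i p.1 then (C.f i p.1).map (fun b => (b, p.2))
    else (D.f i p.2).map (fun b => (p.1, b))

end PreCrystal

/-- Kashiwara raising operator `ẽ_i` of type `A_n^{(1)}` on `(n+1)`-tuples of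
nonnegative integers (zero-indexed: coordinate `j` is `x_{j+1}`): defined iff the
coordinate at index `i` is positive, it adds 1 at index `i-1` (cyclically) and
subtracts 1 at index `i`. -/
def eA (n : ℕ) (i : Fin (n + 1)) (x : Fin (n + 1) → ℕ) : Option (Fin (n + 1) → ℕ) :=
  if 0 < x i then
    some (Function.update (Function.update x (i - 1) (x (i - 1) + 1)) i (x i - 1))
  else none

/-- Kashiwara lowering operator `f̃_i` of type `A_n^{(1)}`: defined iff the coordinate
at index `i-1` is positive, it subtracts 1 at index `i-1` and adds 1 at index `i`. -/
def fA (n : ℕ) (i : Fin (n + 1)) (x : Fin (n + 1) → ℕ) : Option (Fin (n + 1) → ℕ) :=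
  if 0 < x (i - 1) then
    some (Function.update (Function.update x i (x i + 1)) (i - 1) (x (i - 1) - 1))
  else none

/-- The crystal operators of type `A_n^{(1)}` on all `(n+1)`-tuples; the crystal `B_l`
is the subset of tuples with coordinate sum `l`. -/
def BA (n : ℕ) : PreCrystal n where
  carrier := Fin (n + 1) → ℕ
  e := eA n
  f := fA n

/-- The unique element of `{0, ..., n}` congruent to `-k` modulo `n+1`. -/
def negIdx (n : ℕ) (k : ℤ) : Fin (n + 1) :=
  ⟨((-k) % ((n : ℤ) + 1)).toNat, by
    have h1 := Int.emod_nonneg (-k) (by omega : ((n : ℤ) + 1) ≠ 0)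
    have h2 := Int.emod_lt_of_pos (-k) (by omega : (0 : ℤ) < (n : ℤ) + 1)
    omega⟩

/-- The cyclic shift `σ : (x_1, ..., x_{n+1}) ↦ (x_2, ..., x_{n+1}, x_1)`. -/
def shiftA (n : ℕ) (x : Fin (n + 1) → ℕ) : Fin (n + 1) → ℕ := fun j => x (j + 1)

/-- The map `t(x_1, ..., x_{n+1}) = (x_n, x_{n-1}, ..., x_1)`. -/
def tA (n : ℕ) (x : Fin (n + 1) → ℕ) : Fin n → ℕ :=
  fun k => x ⟨n - 1 - (k : ℕ), by omega⟩

/-- The `(N+1)`-fold tensor power `B ⊗ ... ⊗ B`, associated to the left. -/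
noncomputable def BPow (n : ℕ) : ℕ → PreCrystal n
  | 0 => BA n
  | N + 1 => (BPow n N).tensor (BA n)

/-- The element `b_1 ⊗ ... ⊗ b_{N+1}` of the `(N+1)`-fold tensor power. -/
noncomputable def tensorOf (n : ℕ) : (N : ℕ) → (Fin (N + 1) → (Fin (n + 1) → ℕ)) → (BPow n N).carrier
  | 0, b => b 0
  | N + 1, b => (tensorOf n N (fun j => b j.castSucc), b (Fin.last (N + 1)))

/-- Membership in `B_{l_1} ⊗ ... ⊗ B_{l_{N+1}}`: each factor has coordinate sum `l_j`. -/
def memBPow (n : ℕ) : (N : ℕ) → (Fin (N + 1) → ℕ) → (BPow n N).carrier → Prop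
  | 0, l, x => ∑ j, x j = l 0
  | N + 1, l, p => memBPow n N (fun j => l j.castSucc) p.1 ∧ ∑ j, p.2 j = l (Fin.last (N + 1))

/-- The componentwise cyclic shift `σ_B = σ ⊗ ... ⊗ σ` on a tensor power. -/
noncomputable def shiftPow (n : ℕ) : (N : ℕ) → (BPow n N).carrier → (BPow n N).carrier
  | 0, x => shiftA n x
  | N + 1, p => (shiftPow n N p.1, shiftA n p.2)


/-!
Write `δ_c = (0, …, 0, c)`. On `δ_M ⊗ δ_l` every `ẽ_i` with `i ≠ n` and every `f̃_i` with `i ≠ 0`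
is undefined; since `R` commutes with the operators the same holds at `R (δ_M ⊗ δ_l) ∈ B_l ⊗ B_M`,
which forces `R (δ_M ⊗ δ_l) = δ_l ⊗ δ_M`. Every `z ∈ B_l` is reached from `δ_l` by operators `ẽ_i`
with `i ≠ 0` (induction on the weight `∑ (n - j) z_j`), and such an `ẽ_i` acts on the right factor
of both `δ_M ⊗ z` and `δ_l ⊗ (z + δ_{M-l})`, because the left factor vanishes at `i - 1`.
Hence `R (δ_M ⊗ z) = δ_l ⊗ (z + δ_{M-l})` for `M ≥ l`, and `t` does not see the last coordinate.
-/

section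

variable {n : ℕ}

theorem optIter_ne_none_iff {α : Type} {g : α → Option α} {c : α → ℕ}
    (hnone : ∀ x, g x = none ↔ c x = 0) (hsome : ∀ x y, g x = some y → c y + 1 = c x) :
    ∀ m x, OptIter g m x ≠ none ↔ m ≤ c x
  | 0, x => by simp [OptIter]
  | m + 1, x => by
    rcases h : g x with _ | y
    · simp [OptIter, h, (hnone x).1 h]
    · have := hsome x y h
      simp only [OptIter, h, Option.bind_some, optIter_ne_none_iff hnone hsome m y]
      omega

theorem sSup_optIter_ne_none {α : Type} {g : α → Option α} {c : α → ℕ}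
    (hnone : ∀ x, g x = none ↔ c x = 0) (hsome : ∀ x y, g x = some y → c y + 1 = c x) (x : α) :
    sSup {m | OptIter g m x ≠ none} = c x := by
  rw [show {m | OptIter g m x ≠ none} = Set.Iic (c x) from
    Set.ext fun m => optIter_ne_none_iff hnone hsome m x, csSup_Iic]

section BA

variable {i : Fin (n + 1)} {x y : Fin (n + 1) → ℕ}

theorem eA_eq_none_iff : eA n i x = none ↔ x i = 0 := by
  simp [eA]

theorem fA_eq_none_iff : fA n i x = none ↔ x (i - 1) = 0 := by
  simp [fA]

theorem eA_apply_add_one (h : eA n i x = some y) : y i + 1 = x i := by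
  unfold eA at h
  split_ifs at h with hx
  rw [← Option.some_inj.1 h, Function.update_self]
  omega

theorem fA_apply_sub_one_add_one (h : fA n i x = some y) : y (i - 1) + 1 = x (i - 1) := by
  unfold fA at h
  split_ifs at h with hx
  rw [← Option.some_inj.1 h, Function.update_self]
  omega

theorem eps_BA (i : Fin (n + 1)) (x : Fin (n + 1) → ℕ) : (BA n).eps i x = x i :=
  sSup_optIter_ne_none (fun _ => eA_eq_none_iff) (fun _ _ => eA_apply_add_one) x

theorem phi_BA (i : Fin (n + 1)) (x : Fin (n + 1) → ℕ) : (BA n).phi i x = x (i - 1) :=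
  sSup_optIter_ne_none (fun _ => fA_eq_none_iff) (fun _ _ => fA_apply_sub_one_add_one) x

theorem tensor_e_BA (i : Fin (n + 1)) (p : (Fin (n + 1) → ℕ) × (Fin (n + 1) → ℕ)) :
    ((BA n).tensor (BA n)).e i p =
      if p.2 i ≤ p.1 (i - 1) then (eA n i p.1).map (·, p.2) else (eA n i p.2).map (p.1, ·) := by
  simp only [PreCrystal.tensor, eps_BA, phi_BA]
  rfl

theorem tensor_f_BA (i : Fin (n + 1)) (p : (Fin (n + 1) → ℕ) × (Fin (n + 1) → ℕ)) :
    ((BA n).tensor (BA n)).f i p =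
      if p.2 i < p.1 (i - 1) then (fA n i p.1).map (·, p.2) else (fA n i p.2).map (p.1, ·) := by
  simp only [PreCrystal.tensor, eps_BA, phi_BA]
  rfl

theorem tensor_e_BA_eq_none_iff {p : (Fin (n + 1) → ℕ) × (Fin (n + 1) → ℕ)} :
    ((BA n).tensor (BA n)).e i p = none ↔ p.1 i = 0 ∧ p.2 i ≤ p.1 (i - 1) := by
  rw [tensor_e_BA]
  split_ifs with h <;> exact Option.map_eq_none_iff.trans (eA_eq_none_iff.trans (by omega))

theorem tensor_f_BA_eq_none_iff {p : (Fin (n + 1) → ℕ) × (Fin (n + 1) → ℕ)} :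
    ((BA n).tensor (BA n)).f i p = none ↔ p.2 (i - 1) = 0 ∧ p.1 (i - 1) ≤ p.2 i := by
  rw [tensor_f_BA]
  split_ifs with h <;> exact Option.map_eq_none_iff.trans (fA_eq_none_iff.trans (by omega))

theorem eA_add (h : eA n i x = some y) (w : Fin (n + 1) → ℕ) :
    eA n i (x + w) = some (y + w) := by
  unfold eA at h ⊢
  split_ifs at h with hx
  rw [← Option.some_inj.1 h, if_pos (by simp only [Pi.add_apply]; omega)]
  congr 1
  funext j
  simp only [Function.update_apply, Pi.add_apply]
  split_ifs <;> subst_vars <;> omega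

theorem eA_eq_some_iff (hi : i - 1 ≠ i) :
    eA n i x = some y ↔ y + Pi.single i 1 = x + Pi.single (i - 1) 1 := by
  unfold eA
  constructor
  · intro h
    split_ifs at h with hx
    rw [← Option.some_inj.1 h]
    funext j
    simp only [Function.update_apply, Pi.add_apply, Pi.single_apply]
    split_ifs <;> subst_vars <;> omega
  · intro h
    have hj := fun j => congrFun h j
    simp only [Pi.add_apply, Pi.single_apply] at hj
    have hxi := hj i
    rw [if_pos rfl, if_neg hi.symm] at hxi
    rw [if_pos (by omega)]
    congr 1
    funext j
    have := hj j
    simp only [Function.update_apply]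
    split_ifs at this ⊢ <;> subst_vars <;> omega

theorem fA_eq_some_iff (hi : i - 1 ≠ i) :
    fA n i x = some y ↔ y + Pi.single (i - 1) 1 = x + Pi.single i 1 := by
  unfold fA
  constructor
  · intro h
    split_ifs at h with hx
    rw [← Option.some_inj.1 h]
    funext j
    simp only [Function.update_apply, Pi.add_apply, Pi.single_apply]
    split_ifs <;> subst_vars <;> omega
  · intro h
    have hj := fun j => congrFun h j
    simp only [Pi.add_apply, Pi.single_apply] at hj
    have hxi := hj (i - 1)
    rw [if_pos rfl, if_neg hi] at hxi
    rw [if_pos (by omega)]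
    congr 1
    funext j
    have := hj j
    simp only [Function.update_apply]
    split_ifs at this ⊢ <;> subst_vars <;> omega

end BA

theorem eq_single_last_of_sum {x : Fin (n + 1) → ℕ} {c : ℕ} (hx : ∑ j, x j = c)
    (h : ∀ j ≠ Fin.last n, x j = 0) : x = Pi.single (Fin.last n) c := by
  rw [← hx, Finset.sum_eq_single (Fin.last n) (fun j _ hj => h j hj) (by simp)]
  funext j
  by_cases hj : j = Fin.last n
  · simp [hj]
  · simp [h j hj, hj]

theorem induction_from_single_last {l : ℕ} {P : (Fin (n + 1) → ℕ) → Prop}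
    (top : P (Pi.single (Fin.last n) l))
    (step : ∀ i ≠ 0, ∀ x y, ∑ j, x j = l → eA n i x = some y → P x → P y)
    (z : Fin (n + 1) → ℕ) (hz : ∑ j, z j = l) : P z := by
  induction hD : (fun j : Fin (n + 1) => n - (j : ℕ)) ⬝ᵥ z using Nat.strong_induction_on
    generalizing z with
  | _ D ih =>
  by_cases hlast : ∀ j ≠ Fin.last n, z j = 0
  · rwa [eq_single_last_of_sum hz hlast]
  push Not at hlast
  obtain ⟨j, hj, hzj⟩ := hlast
  have hval : ((j + 1 : Fin (n + 1)) : ℕ) = j + 1 :=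
    Fin.val_add_one_of_lt (lt_of_le_of_ne (Fin.le_last j) hj)
  have hsub : j + 1 - 1 = j := add_sub_cancel_right j 1
  have hne : j + 1 - 1 ≠ j + 1 := by rw [hsub]; exact Fin.ne_of_val_ne (by omega)
  obtain ⟨y, hy⟩ := Option.ne_none_iff_exists'.1 (mt fA_eq_none_iff.1 (by rwa [hsub]))
  have hyz := (fA_eq_some_iff hne).1 hy
  rw [hsub] at hyz
  have hysum : ∑ k, y k = l := by
    have := congrArg (fun v => ∑ k, v k) hyz
    simp only [Pi.add_apply, Finset.sum_add_distrib, Fintype.sum_pi_single'] at this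
    omega
  have hyD : (fun j : Fin (n + 1) => n - (j : ℕ)) ⬝ᵥ y < D := by
    have := congrArg ((fun j : Fin (n + 1) => n - (j : ℕ)) ⬝ᵥ ·) hyz
    simp only [dotProduct_add, dotProduct_single_one, hval] at this
    have := Fin.val_lt_last hj
    omega
  refine step (j + 1) (Fin.ne_of_val_ne (by simp [hval])) y z hysum
    ((eA_eq_some_iff hne).2 ?_) (ih _ hyD y hysum rfl)
  rw [hsub, hyz]

section RMatrix

def CommutesWithKashiwaraOn (M l : ℕ)
    (R : (Fin (n + 1) → ℕ) × (Fin (n + 1) → ℕ) → (Fin (n + 1) → ℕ) × (Fin (n + 1) → ℕ)) : Prop :=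
  ∀ i : Fin (n + 1), ∀ p : (Fin (n + 1) → ℕ) × (Fin (n + 1) → ℕ), ∑ j, p.1 j = M → ∑ j, p.2 j = l →
    Option.map R (((BA n).tensor (BA n)).e i p) = ((BA n).tensor (BA n)).e i (R p) ∧
    Option.map R (((BA n).tensor (BA n)).f i p) = ((BA n).tensor (BA n)).f i (R p)

variable {l M : ℕ}
  {R : (Fin (n + 1) → ℕ) × (Fin (n + 1) → ℕ) → (Fin (n + 1) → ℕ) × (Fin (n + 1) → ℕ)}

theorem rMatrix_apply_single_last_single_last
    (hR : Set.MapsTo R {p | ∑ j, p.1 j = M ∧ ∑ j, p.2 j = l}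
      {p | ∑ j, p.1 j = l ∧ ∑ j, p.2 j = M})
    (hcomm : CommutesWithKashiwaraOn M l R) :
    R (Pi.single (Fin.last n) M, Pi.single (Fin.last n) l) =
      (Pi.single (Fin.last n) l, Pi.single (Fin.last n) M) := by
  have hM : ∑ j, Pi.single (Fin.last n) M j = M := Fintype.sum_pi_single' _ _
  have hl : ∑ j, Pi.single (Fin.last n) l j = l := Fintype.sum_pi_single' _ _
  have hmem := hR (x := (Pi.single (Fin.last n) M, Pi.single (Fin.last n) l)) ⟨hM, hl⟩
  have he := fun i => (hcomm i (Pi.single (Fin.last n) M, Pi.single (Fin.last n) l) hM hl).1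
  have hf := fun i => (hcomm i (Pi.single (Fin.last n) M, Pi.single (Fin.last n) l) hM hl).2
  generalize R (Pi.single (Fin.last n) M, Pi.single (Fin.last n) l) = q at hmem he hf ⊢
  obtain ⟨w, v⟩ := q
  obtain ⟨hw, hv⟩ : ∑ j, w j = l ∧ ∑ j, v j = M := hmem
  have hw0 : ∀ i ≠ Fin.last n, w i = 0 := fun i hi => by
    have h0 : ((BA n).tensor (BA n)).e i (Pi.single (Fin.last n) M, Pi.single (Fin.last n) l) =
        none := tensor_e_BA_eq_none_iff.2 ⟨by simp [hi], by simp [hi]⟩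
    exact (tensor_e_BA_eq_none_iff.1 ((he i).symm.trans (Option.map_eq_none_iff.2 h0))).1
  have hv0 : ∀ j ≠ Fin.last n, v j = 0 := fun j hj => by
    have h0 : ((BA n).tensor (BA n)).f (j + 1)
        (Pi.single (Fin.last n) M, Pi.single (Fin.last n) l) = none :=
      tensor_f_BA_eq_none_iff.2 ⟨by simp [hj], by simp [hj]⟩
    simpa using (tensor_f_BA_eq_none_iff.1
      ((hf (j + 1)).symm.trans (Option.map_eq_none_iff.2 h0))).1
  rw [eq_single_last_of_sum hw hw0, eq_single_last_of_sum hv hv0]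

theorem rMatrix_apply_single_last (hlM : l ≤ M)
    (hR : Set.MapsTo R {p | ∑ j, p.1 j = M ∧ ∑ j, p.2 j = l}
      {p | ∑ j, p.1 j = l ∧ ∑ j, p.2 j = M})
    (hcomm : CommutesWithKashiwaraOn M l R)
    (z : Fin (n + 1) → ℕ) (hz : ∑ j, z j = l) :
    R (Pi.single (Fin.last n) M, z) =
      (Pi.single (Fin.last n) l, z + Pi.single (Fin.last n) (M - l)) := by
  refine induction_from_single_last (P := fun z => R (Pi.single (Fin.last n) M, z) =
    (Pi.single (Fin.last n) l, z + Pi.single (Fin.last n) (M - l))) ?_ ?_ z hz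
  · rw [rMatrix_apply_single_last_single_last hR hcomm, ← Pi.single_add, Nat.add_sub_cancel' hlM]
  intro i hi x y hx hxy ih
  have hxi : 0 < x i := by have := eA_apply_add_one hxy; omega
  have hlast : i - 1 ≠ Fin.last n := by rwa [Ne, sub_eq_iff_eq_add, Fin.last_add_one]
  have h := (hcomm i (Pi.single (Fin.last n) M, x) (Fintype.sum_pi_single' _ _) hx).1
  simp only [ih, tensor_e_BA, Pi.add_apply, Pi.single_apply, hlast, if_false, hxy, eA_add hxy,
    nonpos_iff_eq_zero, Nat.add_eq_zero_iff, hxi.ne', false_and, Option.map_some,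
    Option.some_inj] at h
  exact h

end RMatrix

end

theorem stmt13_general (n l : ℕ) :
    ∃ Cst : ℕ, ∀ M : ℕ, Cst ≤ M →
      ∀ R : ((Fin (n + 1) → ℕ) × (Fin (n + 1) → ℕ))
            → ((Fin (n + 1) → ℕ) × (Fin (n + 1) → ℕ)),
        Set.BijOn R {p | (∑ j, p.1 j = M) ∧ (∑ j, p.2 j = l)}
          {p | (∑ j, p.1 j = l) ∧ (∑ j, p.2 j = M)} →
        (∀ i : Fin (n + 1), ∀ p : (Fin (n + 1) → ℕ) × (Fin (n + 1) → ℕ),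
          (∑ j, p.1 j = M) → (∑ j, p.2 j = l) →
          Option.map R (((BA n).tensor (BA n)).e i p)
              = ((BA n).tensor (BA n)).e i (R p) ∧
          Option.map R (((BA n).tensor (BA n)).f i p)
              = ((BA n).tensor (BA n)).f i (R p)) →
        ∀ z : Fin (n + 1) → ℕ, ∑ j, z j = l →
          tA n (R ((fun j => if (j : ℕ) = n then M else 0), z)).2 = tA n z := by
  refine ⟨l, fun M hM R hbij hcomm z hz => ?_⟩
  have hδ : (fun j : Fin (n + 1) => if (j : ℕ) = n then M else 0) = Pi.single (Fin.last n) M := by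
    funext j
    simp [Pi.single_apply, Fin.ext_iff]
  rw [hδ, rMatrix_apply_single_last hM hbij.mapsTo hcomm z hz]
  funext k
  simp only [tA, Pi.add_apply, Pi.single_apply, Fin.ext_iff, Fin.val_last]
  rw [if_neg (by omega), add_zero]

/-- Lemma 3.4 for type `A_n^{(1)}`: there is a constant `C` such that for every
`M ≥ C` and every combinatorial `R` matrix (a bijection `B_M ⊗ B_l → B_l ⊗ B_M`
commuting with all `ẽ_i` and `f̃_i` as partial maps), writing
`R(δ_M[a_0] ⊗ z) = z̃ ⊗ ũ` with `δ_M[a_0] = (0, …, 0, M)`, one has `t(ũ) = t(z)`,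
where `t(x_1,…,x_{n+1}) = (x_n, …, x_1)`. -/
theorem stmt13 (n l : ℕ) (hn : 1 ≤ n) (hl : 1 ≤ l) :
    ∃ Cst : ℕ, ∀ M : ℕ, Cst ≤ M →
      ∀ R : ((Fin (n + 1) → ℕ) × (Fin (n + 1) → ℕ))
            → ((Fin (n + 1) → ℕ) × (Fin (n + 1) → ℕ)),
        Set.BijOn R {p | (∑ j, p.1 j = M) ∧ (∑ j, p.2 j = l)}
          {p | (∑ j, p.1 j = l) ∧ (∑ j, p.2 j = M)} →
        (∀ i : Fin (n + 1), ∀ p : (Fin (n + 1) → ℕ) × (Fin (n + 1) → ℕ),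
          (∑ j, p.1 j = M) → (∑ j, p.2 j = l) →
          Option.map R (((BA n).tensor (BA n)).e i p)
              = ((BA n).tensor (BA n)).e i (R p) ∧
          Option.map R (((BA n).tensor (BA n)).f i p)
              = ((BA n).tensor (BA n)).f i (R p)) →
        ∀ z : Fin (n + 1) → ℕ, ∑ j, z j = l →
          tA n (R ((fun j => if (j : ℕ) = n then M else 0), z)).2 = tA n z :=
  stmt13_general n l
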